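/- arXiv:1512.08250 — 8 statements merged into one kernel-verified Lean document; each statement's English description precedes it below -/
import Mathlib

section
/- The Schur complement admits the decomposition L_S = B_S Γ B_Sᵀ, where B_S = B₁(I − B₂⁺B₂) is the projected incidence matrix and L_S = B₁ΓB₁ᵀ − B₁ΓB₂ᵀ(B₂ΓB₂ᵀ)⁻¹B₂ΓB₁ᵀ. -/
/-!
With `P = I - B₂⁺B₂` one has `P Γ B₂ᵀ = Γ B₂ᵀ - Γ B₂ᵀ (B₂ Γ B₂ᵀ)⁻¹ (B₂ Γ B₂ᵀ) = 0`, hence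
`P Γ Pᵀ = P Γ - (P Γ B₂ᵀ) (B₂⁺)ᵀ = P Γ`, and `B₁ P Γ B₁ᵀ` expands to the Schur complement.
-/

open Matrix

section WeightedProjection

variable {R m n : Type*} [CommRing R] [Fintype m] [Fintype n] [DecidableEq m] [DecidableEq n]

/-- `I - B⁺B` for the weighted right inverse `B⁺ = G Bᵀ (B G Bᵀ)⁻¹`. -/
noncomputable def weightedProjection (B : Matrix n m R) (G : Matrix m m R) : Matrix m m R :=
  1 - G * Bᵀ * (B * G * Bᵀ)⁻¹ * B

variable {B : Matrix n m R} {G : Matrix m m R}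

theorem weightedProjection_mul_mul_transpose (hB : IsUnit (B * G * Bᵀ).det) :
    weightedProjection B G * G * Bᵀ = 0 := by
  rw [weightedProjection, Matrix.sub_mul, Matrix.sub_mul, Matrix.one_mul,
    show G * Bᵀ * (B * G * Bᵀ)⁻¹ * B * G * Bᵀ = G * Bᵀ * ((B * G * Bᵀ)⁻¹ * (B * G * Bᵀ)) by
      simp only [Matrix.mul_assoc],
    nonsing_inv_mul _ hB, Matrix.mul_one, sub_self]

theorem weightedProjection_mul_mul_transpose_self (hB : IsUnit (B * G * Bᵀ).det) :
    weightedProjection B G * G * (weightedProjection B G)ᵀ = weightedProjection B G * G := by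
  have hPt : (weightedProjection B G)ᵀ = 1 - Bᵀ * (G * Bᵀ * (B * G * Bᵀ)⁻¹)ᵀ := by
    rw [weightedProjection, transpose_sub, transpose_one, transpose_mul]
  rw [hPt, Matrix.mul_sub, Matrix.mul_one, ← Matrix.mul_assoc,
    weightedProjection_mul_mul_transpose hB, Matrix.zero_mul, sub_zero]

end WeightedProjection

theorem schur_complement_decomposition_general
    {n₁ n₂ m : ℕ}
    (B₁ : Matrix (Fin n₁) (Fin m) ℝ) (B₂ : Matrix (Fin n₂) (Fin m) ℝ)
    (γ : Fin m → ℝ)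
    (hinv : IsUnit (B₂ * diagonal γ * B₂ᵀ).det) :
    B₁ * diagonal γ * B₁ᵀ -
      B₁ * diagonal γ * B₂ᵀ * (B₂ * diagonal γ * B₂ᵀ)⁻¹ * (B₂ * diagonal γ * B₁ᵀ) =
    (B₁ * (1 - (diagonal γ * B₂ᵀ * (B₂ * diagonal γ * B₂ᵀ)⁻¹) * B₂)) *
      diagonal γ *
    (B₁ * (1 - (diagonal γ * B₂ᵀ * (B₂ * diagonal γ * B₂ᵀ)⁻¹) * B₂))ᵀ := by
  change _ = B₁ * weightedProjection B₂ (diagonal γ) * diagonal γ *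
    (B₁ * weightedProjection B₂ (diagonal γ))ᵀ
  calc _ = B₁ * (weightedProjection B₂ (diagonal γ) * diagonal γ) * B₁ᵀ := by
        simp only [weightedProjection, Matrix.sub_mul, Matrix.mul_sub, Matrix.one_mul,
          Matrix.mul_assoc]
    _ = B₁ * (weightedProjection B₂ (diagonal γ) * diagonal γ *
          (weightedProjection B₂ (diagonal γ))ᵀ) * B₁ᵀ := by
        rw [weightedProjection_mul_mul_transpose_self hinv]
    _ = _ := by simp only [transpose_mul, Matrix.mul_assoc]

theorem schur_complement_decomposition
    {n₁ n₂ m : ℕ} (hn₁ : 0 < n₁) (hn₂ : 0 < n₂) (hm : 0 < m)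
    (B₁ : Matrix (Fin n₁) (Fin m) ℝ) (B₂ : Matrix (Fin n₂) (Fin m) ℝ)
    (γ : Fin m → ℝ) (hγ : ∀ k, 0 < γ k)
    (hrank : B₂.rank = n₂)
    (hinv : IsUnit (B₂ * diagonal γ * B₂ᵀ).det) :
    B₁ * diagonal γ * B₁ᵀ -
      B₁ * diagonal γ * B₂ᵀ * (B₂ * diagonal γ * B₂ᵀ)⁻¹ * (B₂ * diagonal γ * B₁ᵀ) =
    (B₁ * (1 - (diagonal γ * B₂ᵀ * (B₂ * diagonal γ * B₂ᵀ)⁻¹) * B₂)) *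
      diagonal γ *
    (B₁ * (1 - (diagonal γ * B₂ᵀ * (B₂ * diagonal γ * B₂ᵀ)⁻¹) * B₂))ᵀ :=
  schur_complement_decomposition_general B₁ B₂ γ hinv
end

section
/- If the stacked matrix B = col(B₁, B₂) has zero column sums, i.e. B₁ᵀ𝟙_{n₁} + B₂ᵀ𝟙_{n₂} = 0 (where 𝟙 denotes the all-ones vector), then the projected incidence matrix satisfies B_Sᵀ 𝟙_{n₁} = 0. -/
/-!
The projector `I - B₂⁺ B₂` is annihilated by `B₂` on the left, because `B₂⁺` is a right inverse
of `B₂`. Hence `𝟙ᵀ B₁ (I - B₂⁺ B₂) = -𝟙ᵀ B₂ (I - B₂⁺ B₂) = 0`.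
-/

open Matrix

namespace Matrix

variable {R : Type*} [CommRing R] {k l m n : Type*} [Fintype l]

theorem mul_one_sub_mul_eq_zero_of_mul_eq_one [Fintype n] [DecidableEq l] [DecidableEq n]
    {A : Matrix n l R} {P : Matrix l n R} (h : A * P = 1) : A * (1 - P * A) = 0 := by
  rw [Matrix.mul_sub, Matrix.mul_one, ← Matrix.mul_assoc, h, Matrix.one_mul, sub_self]

theorem vecMul_mul_eq_zero_of_vecMul_add_vecMul_eq_zero [Fintype k] [Fintype m]
    {B₁ : Matrix k l R} {B₂ : Matrix m l R} {Q : Matrix l n R} {u : k → R} {v : m → R}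
    (hsum : u ᵥ* B₁ + v ᵥ* B₂ = 0) (hQ : B₂ * Q = 0) : u ᵥ* (B₁ * Q) = 0 := by
  have hu : u ᵥ* B₁ = -(v ᵥ* B₂) := eq_neg_of_add_eq_zero_left hsum
  calc u ᵥ* (B₁ * Q) = (u ᵥ* B₁) ᵥ* Q := (vecMul_vecMul u B₁ Q).symm
    _ = -(v ᵥ* (B₂ * Q)) := by rw [hu, neg_vecMul, vecMul_vecMul]
    _ = 0 := by rw [hQ, vecMul_zero, neg_zero]

end Matrix

theorem projected_incidence_zero_row_sums_general
    {n₁ n₂ m : ℕ}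
    (B₁ : Matrix (Fin n₁) (Fin m) ℝ) (B₂ : Matrix (Fin n₂) (Fin m) ℝ)
    (γ : Fin m → ℝ)
    (hinv : IsUnit (B₂ * diagonal γ * B₂ᵀ).det)
    (hcolsum : B₁ᵀ *ᵥ (fun _ => (1 : ℝ)) + B₂ᵀ *ᵥ (fun _ => (1 : ℝ)) = 0) :
    (B₁ * (1 - (diagonal γ * B₂ᵀ * (B₂ * diagonal γ * B₂ᵀ)⁻¹) * B₂))ᵀ *ᵥ
      (fun _ => (1 : ℝ)) = 0 := by
  have hright : B₂ * (diagonal γ * B₂ᵀ * (B₂ * diagonal γ * B₂ᵀ)⁻¹) = 1 := by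
    rw [← Matrix.mul_assoc, ← Matrix.mul_assoc, mul_nonsing_inv _ hinv]
  rw [mulVec_transpose]
  rw [mulVec_transpose, mulVec_transpose] at hcolsum
  exact vecMul_mul_eq_zero_of_vecMul_add_vecMul_eq_zero hcolsum
    (mul_one_sub_mul_eq_zero_of_mul_eq_one hright)

theorem projected_incidence_zero_row_sums
    {n₁ n₂ m : ℕ} (hn₁ : 0 < n₁) (hn₂ : 0 < n₂) (hm : 0 < m)
    (B₁ : Matrix (Fin n₁) (Fin m) ℝ) (B₂ : Matrix (Fin n₂) (Fin m) ℝ)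
    (γ : Fin m → ℝ) (hγ : ∀ k, 0 < γ k)
    (hrank : B₂.rank = n₂)
    (hinv : IsUnit (B₂ * diagonal γ * B₂ᵀ).det)
    (hcolsum : B₁ᵀ *ᵥ (fun _ => (1 : ℝ)) + B₂ᵀ *ᵥ (fun _ => (1 : ℝ)) = 0) :
    (B₁ * (1 - (diagonal γ * B₂ᵀ * (B₂ * diagonal γ * B₂ᵀ)⁻¹) * B₂))ᵀ *ᵥ
      (fun _ => (1 : ℝ)) = 0 :=
  projected_incidence_zero_row_sums_general B₁ B₂ γ hinv hcolsum
end

section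
/- Suppose the stacked matrix B = col(B₁, B₂) ∈ ℝ^{(n₁+n₂)×m} satisfies ker Bᵀ = span{𝟙_{n₁+n₂}} (i.e., Bᵀx = 0 if and only if x is a scalar multiple of the all-ones vector; this holds when B is the incidence matrix of a connected graph). Then the projected incidence matrix satisfies ker B_Sᵀ = span{𝟙_{n₁}}, i.e., B_Sᵀ y = 0 if and only if y is a scalar multiple of the all-ones vector in ℝ^{n₁}. -/
/-!
Write `A` for the right inverse of `B₂`, so that `B_S = B₁ (1 - A B₂)`. A row vector `y` is killed
by `B_S` exactly when it extends to a vector `(y, z)` killed by the stacked matrix: given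
`y B_S = 0` take `z = -y B₁ A`; conversely `y B₁ = -z B₂` gives `y B₁ (1 - A B₂) = -z (B₂ - B₂ A B₂) = 0`.
Hence the kernel of `B_Sᵀ` is the projection of the kernel of `Bᵀ` onto the first block, and the
projection of the constants is the constants.
-/

open Matrix

namespace Matrix

variable {R n₁ n₂ m : Type*} [Ring R] [Fintype n₁] [Fintype n₂] [Fintype m]
  [DecidableEq n₂] [DecidableEq m]

theorem vecMul_mul_one_sub_eq_zero_iff_exists_vecMul_fromRows_eq_zero
    (B₁ : Matrix n₁ m R) (B₂ : Matrix n₂ m R) (A : Matrix m n₂ R) (hA : B₂ * A = 1)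
    (y : n₁ → R) :
    y ᵥ* (B₁ * (1 - A * B₂)) = 0 ↔ ∃ z, Sum.elim y z ᵥ* fromRows B₁ B₂ = 0 := by
  simp only [sumElim_vecMul_fromRows, ← vecMul_vecMul, vecMul_sub, vecMul_one]
  constructor
  · intro h
    exact ⟨-(y ᵥ* B₁ ᵥ* A), by rw [neg_vecMul, ← sub_eq_add_neg, h]⟩
  · rintro ⟨z, hz⟩
    have hy : y ᵥ* B₁ = -(z ᵥ* B₂) := eq_neg_of_add_eq_zero_left hz
    rw [hy, neg_vecMul, neg_vecMul, vecMul_vecMul, vecMul_vecMul, ← Matrix.mul_assoc, hA,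
      Matrix.one_mul, sub_self]

end Matrix

theorem Sum.elim_eq_const_iff {α β γ : Type*} (f : α → γ) (g : β → γ) (c : γ) :
    Sum.elim f g = (fun _ => c) ↔ f = (fun _ => c) ∧ g = (fun _ => c) := by
  rw [← Sum.elim_lam_const_lam_const, Sum.elim_eq_iff]

theorem projected_incidence_kernel_general
    {n₁ n₂ m : ℕ}
    (B₁ : Matrix (Fin n₁) (Fin m) ℝ) (B₂ : Matrix (Fin n₂) (Fin m) ℝ)
    (γ : Fin m → ℝ)
    (hinv : IsUnit (B₂ * diagonal γ * B₂ᵀ).det)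
    (hker : ∀ x : Fin n₁ ⊕ Fin n₂ → ℝ,
      (Matrix.fromRows B₁ B₂)ᵀ *ᵥ x = 0 ↔ ∃ c : ℝ, x = fun _ => c) :
    ∀ y : Fin n₁ → ℝ,
      (B₁ * (1 - (diagonal γ * B₂ᵀ * (B₂ * diagonal γ * B₂ᵀ)⁻¹) * B₂))ᵀ *ᵥ y = 0 ↔
        ∃ c : ℝ, y = fun _ => c := by
  intro y
  have hright : B₂ * (diagonal γ * B₂ᵀ * (B₂ * diagonal γ * B₂ᵀ)⁻¹) = 1 := by
    rw [← Matrix.mul_assoc, ← Matrix.mul_assoc, mul_nonsing_inv _ hinv]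
  simp only [mulVec_transpose] at hker ⊢
  rw [vecMul_mul_one_sub_eq_zero_iff_exists_vecMul_fromRows_eq_zero _ _ _ hright]
  simp only [hker, Sum.elim_eq_const_iff]
  constructor
  · rintro ⟨_, c, hy, _⟩
    exact ⟨c, hy⟩
  · rintro ⟨c, hy⟩
    exact ⟨fun _ => c, c, hy, rfl⟩

theorem projected_incidence_kernel
    {n₁ n₂ m : ℕ} (hn₁ : 0 < n₁) (hn₂ : 0 < n₂) (hm : 0 < m)
    (B₁ : Matrix (Fin n₁) (Fin m) ℝ) (B₂ : Matrix (Fin n₂) (Fin m) ℝ)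
    (γ : Fin m → ℝ) (hγ : ∀ k, 0 < γ k)
    (hrank : B₂.rank = n₂)
    (hinv : IsUnit (B₂ * diagonal γ * B₂ᵀ).det)
    (hker : ∀ x : Fin n₁ ⊕ Fin n₂ → ℝ,
      (Matrix.fromRows B₁ B₂)ᵀ *ᵥ x = 0 ↔ ∃ c : ℝ, x = fun _ => c) :
    ∀ y : Fin n₁ → ℝ,
      (B₁ * (1 - (diagonal γ * B₂ᵀ * (B₂ * diagonal γ * B₂ᵀ)⁻¹) * B₂))ᵀ *ᵥ y = 0 ↔
        ∃ c : ℝ, y = fun _ => c :=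
  projected_incidence_kernel_general B₁ B₂ γ hinv hker
end

section
/- Suppose θ_G : ℝ → ℝ^{n_g} is twice differentiable and θ_L : ℝ → ℝ^{n_ℓ} satisfies, together with θ_G, the linear differential-algebraic system M θ_G'' = −A θ_G' − B_G Γ B_Gᵀ θ_G − B_G Γ B_Lᵀ θ_L + u and 0 = −B_L Γ B_Gᵀ θ_G − B_L Γ B_Lᵀ θ_L + p* for all t, where u ∈ ℝ^{n_g} and p* ∈ ℝ^{n_ℓ} are constant vectors. Then θ_G satisfies the reduced ordinary differential equation M θ_G'' = −A θ_G' − L_S θ_G + u − p̂, where L_S = B_G Γ B_Gᵀ − B_G Γ B_Lᵀ (B_L Γ B_Lᵀ)⁻¹ B_L Γ B_Gᵀ and p̂ = B_G Γ B_Lᵀ (B_L Γ B_Lᵀ)⁻¹ p*. -/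
/-!
The algebraic equation is linear in `θ_L` with invertible coefficient `B_L Γ B_Lᵀ`, so it can be
solved pointwise in time for `θ_L`; substituting the solution into the swing equation replaces the
coupling term `B_G Γ B_Lᵀ θ_L` by a Schur-complement correction of the stiffness and a constant
shift of the input.
-/

open Matrix

namespace Matrix

variable {k l n R : Type*} [Fintype k] [Fintype n] [DecidableEq n] [CommRing R]

theorem eq_inv_mulVec_of_mulVec_eq {A : Matrix n n R} (hA : IsUnit A.det) {x b : n → R}
    (h : A *ᵥ x = b) : x = A⁻¹ *ᵥ b := by
  rw [← h, mulVec_mulVec, nonsing_inv_mul A hA, one_mulVec]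

theorem mulVec_eq_of_linear_constraint (B : Matrix l n R) {C : Matrix n k R} {D : Matrix n n R}
    (hD : IsUnit D.det) {x : k → R} {y p : n → R} (h : 0 = -(C *ᵥ x) - D *ᵥ y + p) :
    B *ᵥ y = (B * D⁻¹) *ᵥ p - (B * D⁻¹ * C) *ᵥ x := by
  have hy : y = D⁻¹ *ᵥ (p - C *ᵥ x) :=
    eq_inv_mulVec_of_mulVec_eq hD (by linear_combination h)
  rw [hy, mulVec_mulVec, mulVec_sub, mulVec_mulVec, Matrix.mul_assoc]

end Matrix

theorem linear_DAE_to_reduced_ODE_general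
    {ng nl m : ℕ}
    (BG : Matrix (Fin ng) (Fin m) ℝ) (BL : Matrix (Fin nl) (Fin m) ℝ)
    (γ : Fin m → ℝ)
    (hinv : IsUnit (BL * diagonal γ * BLᵀ).det)
    (Md Ad : Fin ng → ℝ)
    (u : Fin ng → ℝ) (pstar : Fin nl → ℝ)
    (θG : ℝ → Fin ng → ℝ) (θL : ℝ → Fin nl → ℝ)
    (hswing : ∀ t : ℝ,
      diagonal Md *ᵥ deriv (deriv θG) t =
        -(diagonal Ad *ᵥ deriv θG t) - (BG * diagonal γ * BGᵀ) *ᵥ θG t -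
          (BG * diagonal γ * BLᵀ) *ᵥ θL t + u)
    (halg : ∀ t : ℝ,
      (0 : Fin nl → ℝ) =
        -((BL * diagonal γ * BGᵀ) *ᵥ θG t) - (BL * diagonal γ * BLᵀ) *ᵥ θL t + pstar) :
    ∀ t : ℝ,
      diagonal Md *ᵥ deriv (deriv θG) t =
        -(diagonal Ad *ᵥ deriv θG t) -
          (BG * diagonal γ * BGᵀ -
            BG * diagonal γ * BLᵀ * (BL * diagonal γ * BLᵀ)⁻¹ * (BL * diagonal γ * BGᵀ)) *ᵥ θG t
          + u - (BG * diagonal γ * BLᵀ * (BL * diagonal γ * BLᵀ)⁻¹) *ᵥ pstar := by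
  intro t
  rw [hswing t, mulVec_eq_of_linear_constraint _ hinv (halg t), sub_mulVec]
  abel

theorem linear_DAE_to_reduced_ODE
    {ng nl m : ℕ} (hng : 0 < ng) (hnl : 0 < nl) (hm : 0 < m)
    (BG : Matrix (Fin ng) (Fin m) ℝ) (BL : Matrix (Fin nl) (Fin m) ℝ)
    (γ : Fin m → ℝ) (hγ : ∀ k, 0 < γ k)
    (hrank : BL.rank = nl)
    (hinv : IsUnit (BL * diagonal γ * BLᵀ).det)
    (Md Ad : Fin ng → ℝ) (hM : ∀ i, 0 < Md i) (hA : ∀ i, 0 < Ad i)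
    (u : Fin ng → ℝ) (pstar : Fin nl → ℝ)
    (θG : ℝ → Fin ng → ℝ) (θL : ℝ → Fin nl → ℝ)
    (hθG : Differentiable ℝ θG) (hθG' : Differentiable ℝ (deriv θG))
    (hswing : ∀ t : ℝ,
      diagonal Md *ᵥ deriv (deriv θG) t =
        -(diagonal Ad *ᵥ deriv θG t) - (BG * diagonal γ * BGᵀ) *ᵥ θG t -
          (BG * diagonal γ * BLᵀ) *ᵥ θL t + u)
    (halg : ∀ t : ℝ,
      (0 : Fin nl → ℝ) =
        -((BL * diagonal γ * BGᵀ) *ᵥ θG t) - (BL * diagonal γ * BLᵀ) *ᵥ θL t + pstar) :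
    ∀ t : ℝ,
      diagonal Md *ᵥ deriv (deriv θG) t =
        -(diagonal Ad *ᵥ deriv θG t) -
          (BG * diagonal γ * BGᵀ -
            BG * diagonal γ * BLᵀ * (BL * diagonal γ * BLᵀ)⁻¹ * (BL * diagonal γ * BGᵀ)) *ᵥ θG t
          + u - (BG * diagonal γ * BLᵀ * (BL * diagonal γ * BLᵀ)⁻¹) *ᵥ pstar :=
  linear_DAE_to_reduced_ODE_general BG BL γ hinv Md Ad u pstar θG θL hswing halg
end

section
/- Suppose θ_G : ℝ → ℝ^{n_g} is twice differentiable and θ_L : ℝ → ℝ^{n_ℓ} satisfies, together with θ_G, the linear differential-algebraic system M θ_G'' = −A θ_G' − B_G Γ B_Gᵀ θ_G − B_G Γ B_Lᵀ θ_L + u and 0 = −B_L Γ B_Gᵀ θ_G − B_L Γ B_Lᵀ θ_L + p* for all t, where u ∈ ℝ^{n_g} and p* ∈ ℝ^{n_ℓ} are constant vectors. Then the pair (η_S, ω_G) with η_S = B_Sᵀ θ_G and ω_G = θ_G' satisfies the reduced state-space model η_S' = B_Sᵀ ω_G and M ω_G' = −A ω_G − B_S Γ η_S + u − p̂, where p̂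 = B_G Γ B_Lᵀ (B_L Γ B_Lᵀ)⁻¹ p*. -/
open Matrix

/-!
Differentiating `η_S = B_Sᵀ θ_G` is linear. For the swing equation, the algebraic constraint
gives `B_L Γ B_Lᵀ θ_L = p* − B_L Γ B_Gᵀ θ_G`, which eliminates `θ_L`, and the Schur-complement
identity `(I − B_L⁺B_L) Γ (I − B_L⁺B_L)ᵀ = Γ − Γ B_Lᵀ (B_L Γ B_Lᵀ)⁻¹ B_L Γ` identifies the
resulting Kron-reduced stiffness matrix with `B_S Γ B_Sᵀ`.
-/

theorem Matrix.deriv_mulVec {𝕜 : Type*} [NontriviallyNormedField 𝕜] [CompleteSpace 𝕜]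
    {m n : Type*} [Fintype m] [Fintype n] (A : Matrix m n 𝕜) {f : 𝕜 → n → 𝕜} {t : 𝕜}
    (hf : DifferentiableAt 𝕜 f t) :
    deriv (fun s => A *ᵥ f s) t = A *ᵥ deriv f t :=
  ((mulVecLin A).toContinuousLinearMap.hasFDerivAt.comp_hasDerivAt t hf.hasDerivAt).deriv

theorem Matrix.one_sub_proj_mul_mul_transpose {R : Type*} [CommRing R] {l n : Type*}
    [Fintype l] [Fintype n] [DecidableEq l] [DecidableEq n] {G : Matrix n n R} (hG : Gᵀ = G)
    (B : Matrix l n R) (hK : IsUnit (B * G * Bᵀ).det) :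
    (1 - G * Bᵀ * (B * G * Bᵀ)⁻¹ * B) * G * (1 - G * Bᵀ * (B * G * Bᵀ)⁻¹ * B)ᵀ =
      G - G * Bᵀ * (B * G * Bᵀ)⁻¹ * B * G := by
  set K := B * G * Bᵀ
  have hKt : Kᵀ = K := by simp only [K, transpose_mul, transpose_transpose, hG, Matrix.mul_assoc]
  have hKinv : (K⁻¹)ᵀ = K⁻¹ := by rw [transpose_nonsing_inv, hKt]
  have hcancel : G * Bᵀ * K⁻¹ * B * G * Bᵀ * K⁻¹ * B * G = G * Bᵀ * K⁻¹ * B * G := by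
    calc G * Bᵀ * K⁻¹ * B * G * Bᵀ * K⁻¹ * B * G
        = G * Bᵀ * (K⁻¹ * K) * K⁻¹ * B * G := by simp only [K, Matrix.mul_assoc]
      _ = G * Bᵀ * K⁻¹ * B * G := by rw [nonsing_inv_mul K hK, Matrix.mul_one]
  simp only [transpose_sub, transpose_one, transpose_mul, transpose_transpose, hG, hKinv,
    Matrix.sub_mul, Matrix.mul_sub, Matrix.one_mul, Matrix.mul_one, ← Matrix.mul_assoc, hcancel]
  abel

theorem Matrix.mulVec_eq_mul_nonsing_inv_mulVec {R : Type*} [CommRing R] {m n : Type*}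
    [Fintype m] [Fintype n] [DecidableEq n] {K : Matrix n n R} (hK : IsUnit K.det)
    (C : Matrix m n R) {x b : n → R} (hx : K *ᵥ x = b) :
    C *ᵥ x = (C * K⁻¹) *ᵥ b := by
  rw [← hx, mulVec_mulVec, Matrix.mul_assoc, nonsing_inv_mul K hK, Matrix.mul_one]

theorem linear_DAE_to_new_reduced_model_general
    {ng nl m : ℕ}
    (BG : Matrix (Fin ng) (Fin m) ℝ) (BL : Matrix (Fin nl) (Fin m) ℝ)
    (γ : Fin m → ℝ)
    (hinv : IsUnit (BL * diagonal γ * BLᵀ).det)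
    (Md Ad : Fin ng → ℝ)
    (u : Fin ng → ℝ) (pstar : Fin nl → ℝ)
    (θG : ℝ → Fin ng → ℝ) (θL : ℝ → Fin nl → ℝ)
    (hθG : Differentiable ℝ θG)
    (hswing : ∀ t : ℝ,
      diagonal Md *ᵥ deriv (deriv θG) t =
        -(diagonal Ad *ᵥ deriv θG t) - (BG * diagonal γ * BGᵀ) *ᵥ θG t -
          (BG * diagonal γ * BLᵀ) *ᵥ θL t + u)
    (halg : ∀ t : ℝ,
      (0 : Fin nl → ℝ) =
        -((BL * diagonal γ * BGᵀ) *ᵥ θG t) - (BL * diagonal γ * BLᵀ) *ᵥ θL t + pstar) :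
    (∀ t : ℝ,
      deriv (fun s =>
        (BG * (1 - (diagonal γ * BLᵀ * (BL * diagonal γ * BLᵀ)⁻¹) * BL))ᵀ *ᵥ θG s) t =
      (BG * (1 - (diagonal γ * BLᵀ * (BL * diagonal γ * BLᵀ)⁻¹) * BL))ᵀ *ᵥ deriv θG t) ∧
    (∀ t : ℝ,
      diagonal Md *ᵥ deriv (deriv θG) t =
        -(diagonal Ad *ᵥ deriv θG t) -
          ((BG * (1 - (diagonal γ * BLᵀ * (BL * diagonal γ * BLᵀ)⁻¹) * BL)) * diagonal γ) *ᵥ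
            ((BG * (1 - (diagonal γ * BLᵀ * (BL * diagonal γ * BLᵀ)⁻¹) * BL))ᵀ *ᵥ θG t)
          + u - (BG * diagonal γ * BLᵀ * (BL * diagonal γ * BLᵀ)⁻¹) *ᵥ pstar) := by
  set G := diagonal γ
  set K := BL * G * BLᵀ
  refine ⟨fun t => deriv_mulVec _ (hθG t), fun t => ?_⟩
  have hstiff : BG * (1 - G * BLᵀ * K⁻¹ * BL) * G * (BG * (1 - G * BLᵀ * K⁻¹ * BL))ᵀ =
      BG * G * BGᵀ - BG * G * BLᵀ * K⁻¹ * (BL * G * BGᵀ) := by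
    rw [transpose_mul, Matrix.mul_assoc BG, Matrix.mul_assoc BG, ← Matrix.mul_assoc _ _ BGᵀ,
      one_sub_proj_mul_mul_transpose (diagonal_transpose γ) BL hinv]
    simp only [Matrix.mul_sub, Matrix.sub_mul, ← Matrix.mul_assoc]
    rfl
  have hθL : (BG * G * BLᵀ) *ᵥ θL t = (BG * G * BLᵀ * K⁻¹) *ᵥ (pstar - (BL * G * BGᵀ) *ᵥ θG t) :=
    mulVec_eq_mul_nonsing_inv_mulVec hinv _ (by linear_combination halg t)
  rw [hswing t, mulVec_mulVec, hstiff, sub_mulVec, hθL, mulVec_sub, mulVec_mulVec]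
  abel

theorem linear_DAE_to_new_reduced_model
    {ng nl m : ℕ} (hng : 0 < ng) (hnl : 0 < nl) (hm : 0 < m)
    (BG : Matrix (Fin ng) (Fin m) ℝ) (BL : Matrix (Fin nl) (Fin m) ℝ)
    (γ : Fin m → ℝ) (hγ : ∀ k, 0 < γ k)
    (hrank : BL.rank = nl)
    (hinv : IsUnit (BL * diagonal γ * BLᵀ).det)
    (Md Ad : Fin ng → ℝ) (hM : ∀ i, 0 < Md i) (hA : ∀ i, 0 < Ad i)
    (u : Fin ng → ℝ) (pstar : Fin nl → ℝ)
    (θG : ℝ → Fin ng → ℝ) (θL : ℝ → Fin nl → ℝ)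
    (hθG : Differentiable ℝ θG) (hθG' : Differentiable ℝ (deriv θG))
    (hswing : ∀ t : ℝ,
      diagonal Md *ᵥ deriv (deriv θG) t =
        -(diagonal Ad *ᵥ deriv θG t) - (BG * diagonal γ * BGᵀ) *ᵥ θG t -
          (BG * diagonal γ * BLᵀ) *ᵥ θL t + u)
    (halg : ∀ t : ℝ,
      (0 : Fin nl → ℝ) =
        -((BL * diagonal γ * BGᵀ) *ᵥ θG t) - (BL * diagonal γ * BLᵀ) *ᵥ θL t + pstar) :
    (∀ t : ℝ,
      deriv (fun s =>
        (BG * (1 - (diagonal γ * BLᵀ * (BL * diagonal γ * BLᵀ)⁻¹) * BL))ᵀ *ᵥ θG s) t =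
      (BG * (1 - (diagonal γ * BLᵀ * (BL * diagonal γ * BLᵀ)⁻¹) * BL))ᵀ *ᵥ deriv θG t) ∧
    (∀ t : ℝ,
      diagonal Md *ᵥ deriv (deriv θG) t =
        -(diagonal Ad *ᵥ deriv θG t) -
          ((BG * (1 - (diagonal γ * BLᵀ * (BL * diagonal γ * BLᵀ)⁻¹) * BL)) * diagonal γ) *ᵥ
            ((BG * (1 - (diagonal γ * BLᵀ * (BL * diagonal γ * BLᵀ)⁻¹) * BL))ᵀ *ᵥ θG t)
          + u - (BG * diagonal γ * BLᵀ * (BL * diagonal γ * BLᵀ)⁻¹) *ᵥ pstar) :=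
  linear_DAE_to_new_reduced_model_general BG BL γ hinv Md Ad u pstar θG θL hθG hswing halg
end

section
/- (DAE to reduced ODE.) Let u ∈ ℝ^{n_g} be constant and p* ∈ ℝ^{n_ℓ} be constant. Suppose on the interval I = [0,T) the functions θ = col(θ_G, θ_L) : I → ℝ^{n_g+n_ℓ} and ω_G = θ_G' satisfy the nonlinear differential-algebraic system θ_G' = ω_G, M ω_G' = −A ω_G − B_G Γ sin(Bᵀθ) + u, and 0 = −B_L Γ sin(Bᵀθ) + p*, with θ_G, θ_L differentiable and Bᵀθ(t) ∈ Ω = (−π/2, π/2)^m for all t ∈ I. Then the pair (η, ω_G) with η = Bᵀθ satisfies on I the reduced ordinary differential equations η' = B_S(η)ᵀ ω_G and M ω_G' = −A ω_G − B_G Γ sin(η) + u. -/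
open Matrix

/-- The state-dependent projected incidence matrix `B_S(η)`, built from the
state-dependent weight matrix `Γ'(η) = Γ diag(cos η_k)`. -/
noncomputable def projIncidence {ng nl m : ℕ}
    (BG : Matrix (Fin ng) (Fin m) ℝ) (BL : Matrix (Fin nl) (Fin m) ℝ)
    (γ : Fin m → ℝ) (η : Fin m → ℝ) : Matrix (Fin ng) (Fin m) ℝ :=
  let Γ' : Matrix (Fin m) (Fin m) ℝ := diagonal fun k => γ k * Real.cos (η k)
  BG * (1 - (Γ' * BLᵀ * (BL * Γ' * BLᵀ)⁻¹) * BL)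

/-!
Along a solution, `η = Bᵀθ` has derivative `v = B_Gᵀ ω_G + B_Lᵀ θ_L'`, and differentiating the
constraint `B_L Γ sin η = p*` gives `B_L Γ'(η) v = 0`. Now `P = I − B_L⁺ B_L` is the projection
onto `ker B_L` along `range (Γ' B_Lᵀ)`, so `Pᵀ` kills `range B_Lᵀ` and fixes `ker (B_L Γ')`;
hence `B_Sᵀ ω_G = Pᵀ B_Gᵀ ω_G = Pᵀ v = v`. The inverse in `B_L⁺` exists because `B_L` has
full row rank and `Γ'(η)` is positive definite on `Ω`.
-/

open Set Filter Topology

theorem Matrix.vecMul_injective_of_rank_eq_card {K ι κ : Type*} [Field K] [Fintype ι] [Fintype κ]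
    {L : Matrix ι κ K} (hL : L.rank = Fintype.card ι) : Function.Injective L.vecMul :=
  vecMul_injective_iff.mpr <| linearIndependent_iff_card_eq_finrank_span.mpr <| by
    rw [Set.finrank, ← rank_eq_finrank_span_row, hL]

theorem Matrix.PosDef.mul_mul_transpose_of_rank_eq_card {ι κ : Type*} [Fintype ι] [Fintype κ]
    {A : Matrix κ κ ℝ} (hA : A.PosDef) {L : Matrix ι κ ℝ} (hL : L.rank = Fintype.card ι) :
    (L * A * Lᵀ).PosDef := by
  simpa only [conjTranspose_eq_transpose_of_trivial] using
    hA.mul_mul_conjTranspose_same (vecMul_injective_of_rank_eq_card hL)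

section ObliqueProjection

variable {K ι κ : Type*} [Field K] [Fintype ι] [Fintype κ] [DecidableEq ι] [DecidableEq κ]

/-- With `W = Γ'(η)` and `L = B_L`, this is `I − B_L⁺(η) B_L`, so that
`projIncidence BG BL γ η = BG * obliqueKerProj Γ'(η) BL` by definition. -/
noncomputable def obliqueKerProj (W : Matrix κ κ K) (L : Matrix ι κ K) : Matrix κ κ K :=
  1 - W * Lᵀ * (L * W * Lᵀ)⁻¹ * L

variable {W : Matrix κ κ K} {L : Matrix ι κ K}

theorem mul_obliqueKerProj (hS : IsUnit (L * W * Lᵀ).det) : L * obliqueKerProj W L = 0 := by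
  rw [obliqueKerProj, Matrix.mul_sub, Matrix.mul_one, ← Matrix.mul_assoc, ← Matrix.mul_assoc,
    ← Matrix.mul_assoc, mul_nonsing_inv _ hS, Matrix.one_mul, sub_self]

theorem vecMul_obliqueKerProj_of_mulVec_eq_zero (hW : Wᵀ = W) {v : κ → K}
    (hv : L *ᵥ (W *ᵥ v) = 0) : v ᵥ* obliqueKerProj W L = v := by
  have hvW : v ᵥ* W ᵥ* Lᵀ = 0 := by
    rw [← mulVec_transpose, transpose_transpose, ← mulVec_transpose, hW, hv]
  rw [obliqueKerProj, vecMul_sub, vecMul_one, ← vecMul_vecMul, ← vecMul_vecMul, ← vecMul_vecMul,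
    hvW, zero_vecMul, zero_vecMul, sub_zero]

theorem transpose_mul_obliqueKerProj_mulVec {γ : Type*} [Fintype γ] (G : Matrix γ κ K)
    (hW : Wᵀ = W) (hS : IsUnit (L * W * Lᵀ).det) {y : γ → K} {x : ι → K}
    (h : L *ᵥ (W *ᵥ (Gᵀ *ᵥ y + Lᵀ *ᵥ x)) = 0) :
    (G * obliqueKerProj W L)ᵀ *ᵥ y = Gᵀ *ᵥ y + Lᵀ *ᵥ x := by
  have hLx : (Lᵀ *ᵥ x) ᵥ* obliqueKerProj W L = 0 := by
    rw [mulVec_transpose, vecMul_vecMul, mul_obliqueKerProj hS, vecMul_zero]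
  calc (G * obliqueKerProj W L)ᵀ *ᵥ y
      = (Gᵀ *ᵥ y + Lᵀ *ᵥ x) ᵥ* obliqueKerProj W L := by
        rw [add_vecMul, hLx, add_zero, mulVec_transpose, mulVec_transpose, vecMul_vecMul]
    _ = Gᵀ *ᵥ y + Lᵀ *ᵥ x := vecMul_obliqueKerProj_of_mulVec_eq_zero hW h

end ObliqueProjection

theorem HasDerivAt.matrix_mulVec {𝕜 ι κ : Type*} [NontriviallyNormedField 𝕜] [Fintype ι]
    [Fintype κ] (A : Matrix ι κ 𝕜) {f : 𝕜 → κ → 𝕜} {f' : κ → 𝕜} {t : 𝕜}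
    (hf : HasDerivAt f f' t) : HasDerivAt (fun s => A *ᵥ f s) (A *ᵥ f') t :=
  hasDerivAt_pi.mpr fun i => by
    simpa only [mulVec, dotProduct] using
      HasDerivAt.fun_sum fun j _ => (hasDerivAt_pi.mp hf j).const_mul (A i j)

theorem HasDerivAt.eq_zero_of_eqOn_Ico {E : Type*} [NormedAddCommGroup E] [NormedSpace ℝ E]
    {f : ℝ → E} {f' c : E} {a b t : ℝ} (hf : HasDerivAt f f' t) (ht : t ∈ Ico a b)
    (hc : EqOn f (fun _ => c) (Ico a b)) : f' = 0 := by
  have hloc : f =ᶠ[𝓝[≥] t] fun _ => c :=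
    eventually_of_mem (Ico_mem_nhdsGE ht.2) fun s hs => hc ⟨ht.1.trans hs.1, hs.2⟩
  exact (uniqueDiffWithinAt_Ici t).eq_deriv _
    (hf.hasDerivWithinAt.congr_of_eventuallyEq hloc.symm (hc ht).symm)
    (hasDerivWithinAt_const _ _ c)

theorem hasDerivAt_pi_sin {ι : Type*} [Fintype ι] {f : ℝ → ι → ℝ} {f' : ι → ℝ} {t : ℝ}
    (hf : HasDerivAt f f' t) :
    HasDerivAt (fun s k => Real.sin (f s k)) (fun k => Real.cos (f t k) * f' k) t :=
  hasDerivAt_pi.mpr fun k => (hasDerivAt_pi.mp hf k).sin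

theorem nonlinear_DAE_to_reduced_ODE_general
    {ng nl m : ℕ}
    (BG : Matrix (Fin ng) (Fin m) ℝ) (BL : Matrix (Fin nl) (Fin m) ℝ)
    (γ : Fin m → ℝ) (hγ : ∀ k, 0 < γ k)
    (hrank : BL.rank = nl)
    (Md Ad : Fin ng → ℝ)
    (u : Fin ng → ℝ) (pstar : Fin nl → ℝ)
    (T : ℝ)
    (θG : ℝ → Fin ng → ℝ) (θL : ℝ → Fin nl → ℝ)
    (ωG ωG' : ℝ → Fin ng → ℝ) (θL' : ℝ → Fin nl → ℝ)
    (hθG : ∀ t ∈ Set.Ico (0 : ℝ) T, HasDerivAt θG (ωG t) t)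
    (hθL : ∀ t ∈ Set.Ico (0 : ℝ) T, HasDerivAt θL (θL' t) t)
    (hswing : ∀ t ∈ Set.Ico (0 : ℝ) T,
      diagonal Md *ᵥ ωG' t =
        -(diagonal Ad *ᵥ ωG t) -
          (BG * diagonal γ) *ᵥ (fun k => Real.sin ((BGᵀ *ᵥ θG t + BLᵀ *ᵥ θL t) k)) + u)
    (halg : ∀ t ∈ Set.Ico (0 : ℝ) T,
      (0 : Fin nl → ℝ) =
        -((BL * diagonal γ) *ᵥ (fun k => Real.sin ((BGᵀ *ᵥ θG t + BLᵀ *ᵥ θL t) k))) + pstar)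
    (hΩ : ∀ t ∈ Set.Ico (0 : ℝ) T, ∀ k,
      (BGᵀ *ᵥ θG t + BLᵀ *ᵥ θL t) k ∈ Set.Ioo (-(Real.pi / 2)) (Real.pi / 2)) :
    (∀ t ∈ Set.Ico (0 : ℝ) T,
      HasDerivAt (fun s => BGᵀ *ᵥ θG s + BLᵀ *ᵥ θL s)
        ((projIncidence BG BL γ (BGᵀ *ᵥ θG t + BLᵀ *ᵥ θL t))ᵀ *ᵥ ωG t) t) ∧
    (∀ t ∈ Set.Ico (0 : ℝ) T,
      diagonal Md *ᵥ ωG' t =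
        -(diagonal Ad *ᵥ ωG t) -
          (BG * diagonal γ) *ᵥ (fun k => Real.sin ((BGᵀ *ᵥ θG t + BLᵀ *ᵥ θL t) k)) + u) := by
  refine ⟨fun t ht => ?_, hswing⟩
  set η : ℝ → Fin m → ℝ := fun s => BGᵀ *ᵥ θG s + BLᵀ *ᵥ θL s
  set d : Fin m → ℝ := fun k => γ k * Real.cos (η t k)
  set v : Fin m → ℝ := BGᵀ *ᵥ ωG t + BLᵀ *ᵥ θL' t
  have hη : HasDerivAt η v t :=
    ((hθG t ht).matrix_mulVec BGᵀ).add ((hθL t ht).matrix_mulVec BLᵀ)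
  have hconstraint : BL *ᵥ (diagonal d *ᵥ v) = 0 := by
    have h := ((hasDerivAt_pi_sin hη).matrix_mulVec (BL * diagonal γ)).eq_zero_of_eqOn_Ico ht
      (c := pstar) fun s hs => (neg_add_eq_zero.mp (halg s hs).symm)
    have hweight : diagonal γ *ᵥ (fun k => Real.cos (η t k) * v k) = diagonal d *ᵥ v := by
      ext k
      simp only [mulVec_diagonal, d]
      ring
    rwa [← mulVec_mulVec, hweight] at h
  have hd : ∀ k, 0 < d k := fun k => mul_pos (hγ k) (Real.cos_pos_of_mem_Ioo (hΩ t ht k))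
  have hS : IsUnit (BL * diagonal d * BLᵀ).det :=
    ((PosDef.diagonal hd).mul_mul_transpose_of_rank_eq_card
      (hrank.trans (Fintype.card_fin nl).symm)).det_pos.ne'.isUnit
  convert hη using 1
  exact transpose_mul_obliqueKerProj_mulVec BG (diagonal_transpose d) hS hconstraint

theorem nonlinear_DAE_to_reduced_ODE
    {ng nl m : ℕ} (hng : 0 < ng) (hnl : 0 < nl) (hm : 0 < m)
    (BG : Matrix (Fin ng) (Fin m) ℝ) (BL : Matrix (Fin nl) (Fin m) ℝ)
    (γ : Fin m → ℝ) (hγ : ∀ k, 0 < γ k)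
    (hrank : BL.rank = nl)
    (Md Ad : Fin ng → ℝ) (hM : ∀ i, 0 < Md i) (hA : ∀ i, 0 < Ad i)
    (u : Fin ng → ℝ) (pstar : Fin nl → ℝ)
    (T : ℝ) (hT : 0 < T)
    (θG : ℝ → Fin ng → ℝ) (θL : ℝ → Fin nl → ℝ)
    (ωG ωG' : ℝ → Fin ng → ℝ) (θL' : ℝ → Fin nl → ℝ)
    (hθG : ∀ t ∈ Set.Ico (0 : ℝ) T, HasDerivAt θG (ωG t) t)
    (hθL : ∀ t ∈ Set.Ico (0 : ℝ) T, HasDerivAt θL (θL' t) t)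
    (hωG : ∀ t ∈ Set.Ico (0 : ℝ) T, HasDerivAt ωG (ωG' t) t)
    (hswing : ∀ t ∈ Set.Ico (0 : ℝ) T,
      diagonal Md *ᵥ ωG' t =
        -(diagonal Ad *ᵥ ωG t) -
          (BG * diagonal γ) *ᵥ (fun k => Real.sin ((BGᵀ *ᵥ θG t + BLᵀ *ᵥ θL t) k)) + u)
    (halg : ∀ t ∈ Set.Ico (0 : ℝ) T,
      (0 : Fin nl → ℝ) =
        -((BL * diagonal γ) *ᵥ (fun k => Real.sin ((BGᵀ *ᵥ θG t + BLᵀ *ᵥ θL t) k))) + pstar)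
    (hΩ : ∀ t ∈ Set.Ico (0 : ℝ) T, ∀ k,
      (BGᵀ *ᵥ θG t + BLᵀ *ᵥ θL t) k ∈ Set.Ioo (-(Real.pi / 2)) (Real.pi / 2)) :
    (∀ t ∈ Set.Ico (0 : ℝ) T,
      HasDerivAt (fun s => BGᵀ *ᵥ θG s + BLᵀ *ᵥ θL s)
        ((projIncidence BG BL γ (BGᵀ *ᵥ θG t + BLᵀ *ᵥ θL t))ᵀ *ᵥ ωG t) t) ∧
    (∀ t ∈ Set.Ico (0 : ℝ) T,
      diagonal Md *ᵥ ωG' t =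
        -(diagonal Ad *ᵥ ωG t) -
          (BG * diagonal γ) *ᵥ (fun k => Real.sin ((BGᵀ *ᵥ θG t + BLᵀ *ᵥ θL t) k)) + u) :=
  nonlinear_DAE_to_reduced_ODE_general BG BL γ hγ hrank Md Ad u pstar T θG θL ωG ωG' θL' hθG hθL
    hswing halg hΩ
end

section
/- (Reduced ODE to DAE.) Let u ∈ ℝ^{n_g} and p* ∈ ℝ^{n_ℓ} be constant. Suppose (η, ω_G) : I → ℝ^m × ℝ^{n_g}, with I = [0,T), is differentiable and satisfies the reduced ordinary differential equations η' = B_S(η)ᵀ ω_G and M ω_G' = −A ω_G − B_G Γ sin(η) + u on I, with η(t) ∈ Ω for all t ∈ I, and assume the compatible initial condition η(0) ∈ im Bᵀ and 0 = p* − B_L Γ sin(η(0)). Then there exists a differentiable θ = col(θ_G, θ_L) : I → ℝ^{n_g+n_ℓ} with Bᵀθ(t) = η(t) such that (θ_G, θ_L, ω_G) satisfies the differential-algebraic system θ_G' = ω_G, M ω_G' = −A ω_G − B_G Γ sin(Bᵀθ) + u, and 0 = −B_L Γ sin(Bᵀθ) + p* on I. -/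
/-!
The angle differences `η` are lifted to bus angles by integrating the generator frequencies:
`θ_G = θ_G(0) + ∫ ω_G`. Since `B_S(η)ᵀ ω_G ≡ B_Gᵀ ω_G` modulo `im B_Lᵀ`, the residual
`η - B_Gᵀ θ_G` has its derivative in `im B_Lᵀ` and starts there by the initial condition, so it
stays there; applying a left inverse of `B_Lᵀ` to it defines `θ_L`. The load power balance is a
first integral: `d/dt (B_L Γ sin η) = B_L Γ'(η) B_S(η)ᵀ ω_G = 0`, because
`B_S(η) Γ'(η) B_Lᵀ = 0`.
-/

open Matrix Set

section Calculus

variable {E : Type*} [NormedAddCommGroup E] [NormedSpace ℝ E] {a b : ℝ}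

theorem eq_of_hasDerivAt_zero_Ico {f : ℝ → E} (hf : ∀ t ∈ Ico a b, HasDerivAt f 0 t) :
    ∀ t ∈ Ico a b, f t = f a := by
  intro t ht
  refine constant_of_has_deriv_right_zero (fun s hs => ?_) (fun s hs => ?_) t ⟨ht.1, le_rfl⟩
  · exact (hf s ⟨hs.1, hs.2.trans_lt ht.2⟩).continuousAt.continuousWithinAt
  · exact (hf s ⟨hs.1, hs.2.trans ht.2⟩).hasDerivWithinAt

theorem exists_hasDerivAt_Ico_of_continuousAt [CompleteSpace E] {f : ℝ → E}
    (hf : ∀ t ∈ Ico a b, ContinuousAt f t) (c : E) :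
    ∃ F : ℝ → E, F a = c ∧ ∀ t ∈ Ico a b, HasDerivAt F (f t) t := by
  -- `f` is only controlled on `[a, b)`, so integrate its extension frozen at `f a` left of `a`.
  set g : ℝ → E := fun s => f (max s a)
  have hg : ∀ s < b, a < b → ContinuousAt g s := fun s hs hab =>
    ContinuousAt.comp (f := fun s => max s a) (x := s) (hf _ ⟨le_max_right s a, max_lt hs hab⟩)
      (continuous_id.max continuous_const).continuousAt
  refine ⟨fun t => c + ∫ s in a..t, g s, by simp, fun t ht => ?_⟩
  have hab : a < b := ht.1.trans_lt ht.2
  have hint : IntervalIntegrable g MeasureTheory.volume a t :=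
    ContinuousOn.intervalIntegrable fun s hs => by
      rw [uIcc_of_le ht.1] at hs
      exact (hg s (hs.2.trans_lt ht.2) hab).continuousWithinAt
  have hmeas : StronglyMeasurableAtFilter g (nhds t) MeasureTheory.volume :=
    ContinuousAt.stronglyMeasurableAtFilter isOpen_Iio (fun s hs => hg s hs hab) t ht.2
  simpa [g, max_eq_left ht.1] using
    (intervalIntegral.integral_hasDerivAt_right hint hmeas (hg t ht.2 hab)).const_add c

end Calculus

namespace Matrix

variable {ι κ : Type*} [Fintype ι] [Fintype κ]

theorem _root_.HasDerivAt.matrix_mulVec_s11 {A : Matrix ι κ ℝ} {f : ℝ → κ → ℝ} {f' : κ → ℝ} {t : ℝ}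
    (hf : HasDerivAt f f' t) : HasDerivAt (fun s => A *ᵥ f s) (A *ᵥ f') t :=
  (LinearMap.toContinuousLinearMap A.mulVecLin).hasFDerivAt.comp_hasDerivAt t hf

theorem eq_mulVec_mulVec_of_hasDerivAt_mulVec [DecidableEq κ] {A : Matrix ι κ ℝ}
    {C : Matrix κ ι ℝ} (hCA : C * A = 1) {f : ℝ → ι → ℝ} {a b : ℝ}
    (hf : ∀ t ∈ Ico a b, ∃ w, HasDerivAt f (A *ᵥ w) t) (ha : ∃ y, f a = A *ᵥ y) :
    ∀ t ∈ Ico a b, f t = A *ᵥ (C *ᵥ f t) := by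
  have hACA : ∀ w, A *ᵥ (C *ᵥ (A *ᵥ w)) = A *ᵥ w := fun w => by
    rw [mulVec_mulVec, mulVec_mulVec, Matrix.mul_assoc, hCA, Matrix.mul_one]
  have hderiv : ∀ t ∈ Ico a b, HasDerivAt (fun s => f s - A *ᵥ (C *ᵥ f s)) 0 t := fun t ht => by
    obtain ⟨w, hw⟩ := hf t ht
    have h := hw.fun_sub ((hw.matrix_mulVec_s11 (A := C)).matrix_mulVec_s11 (A := A))
    rwa [hACA, sub_self] at h
  obtain ⟨y, hy⟩ := ha
  intro t ht
  have h := eq_of_hasDerivAt_zero_Ico hderiv t ht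
  rwa [hy, hACA, sub_self, sub_eq_zero] at h

theorem isUnit_det_mul_diagonal_mul_transpose [DecidableEq ι] [DecidableEq κ]
    {B : Matrix ι κ ℝ} (hB : B.rank = Fintype.card ι) {d : κ → ℝ} (hd : ∀ k, 0 < d k) :
    IsUnit (B * diagonal d * Bᵀ).det := by
  have hrows : LinearIndependent ℝ B.row :=
    linearIndependent_iff_card_eq_finrank_span.mpr
      (by rw [Set.finrank, ← B.rank_eq_finrank_span_row, hB])
  have hpos : (B * diagonal d * Bᴴ).PosDef :=
    (posDef_diagonal_iff.mpr hd).mul_mul_conjTranspose_same (vecMul_injective_iff.mpr hrows)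
  rw [conjTranspose_eq_transpose_of_trivial] at hpos
  exact (isUnit_iff_isUnit_det _).mp hpos.isUnit

variable {R : Type*} [CommRing R]

/-- For `D = Γ'(η)` this is the paper's `B_L⁺(η)`. -/
noncomputable def weightedRightInverse [DecidableEq ι] (B : Matrix ι κ R) (D : Matrix κ κ R) :
    Matrix κ ι R :=
  D * Bᵀ * (B * D * Bᵀ)⁻¹

theorem one_sub_weightedRightInverse_mul_mul_mul_transpose [DecidableEq ι] [DecidableEq κ]
    {B : Matrix ι κ R} {D : Matrix κ κ R} (h : IsUnit (B * D * Bᵀ).det) :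
    (1 - weightedRightInverse B D * B) * D * Bᵀ = 0 := by
  rw [weightedRightInverse, Matrix.sub_mul, Matrix.sub_mul, Matrix.one_mul,
    Matrix.mul_assoc _ B D, Matrix.mul_assoc _ (B * D) Bᵀ, Matrix.mul_assoc (D * Bᵀ),
    nonsing_inv_mul _ h, Matrix.mul_one, sub_self]

end Matrix

section PowerNetwork

variable {ng nl m : ℕ} (BG : Matrix (Fin ng) (Fin m) ℝ) (BL : Matrix (Fin nl) (Fin m) ℝ)
  (γ : Fin m → ℝ)

theorem projIncidence_eq (η : Fin m → ℝ) :
    projIncidence BG BL γ η =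
      BG * (1 - weightedRightInverse BL (diagonal fun k => γ k * Real.cos (η k)) * BL) :=
  rfl

theorem exists_projIncidence_transpose_mulVec_eq (η : Fin m → ℝ) (ω : Fin ng → ℝ) :
    ∃ w, (projIncidence BG BL γ η)ᵀ *ᵥ ω = BGᵀ *ᵥ ω + BLᵀ *ᵥ w := by
  set W := weightedRightInverse BL (diagonal fun k => γ k * Real.cos (η k))
  refine ⟨-((BG * W)ᵀ *ᵥ ω), ?_⟩
  rw [projIncidence_eq, Matrix.mul_sub, Matrix.mul_one, transpose_sub, ← Matrix.mul_assoc,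
    transpose_mul, sub_mulVec, mulVec_neg, mulVec_mulVec, sub_eq_add_neg]

theorem mul_diagonal_mul_projIncidence_transpose {η : Fin m → ℝ}
    (h : IsUnit (BL * diagonal (fun k => γ k * Real.cos (η k)) * BLᵀ).det) :
    BL * diagonal (fun k => γ k * Real.cos (η k)) * (projIncidence BG BL γ η)ᵀ = 0 := by
  have h0 : projIncidence BG BL γ η * diagonal (fun k => γ k * Real.cos (η k)) * BLᵀ = 0 := by
    rw [projIncidence_eq, Matrix.mul_assoc, Matrix.mul_assoc, ← Matrix.mul_assoc _ (diagonal _),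
      one_sub_weightedRightInverse_mul_mul_mul_transpose h, Matrix.mul_zero]
  simpa [transpose_mul, Matrix.mul_assoc] using congrArg transpose h0

theorem hasDerivAt_mulVec_sin_eq_zero {γ} (hγ : ∀ k, 0 < γ k) (hrank : BL.rank = nl)
    {η : ℝ → Fin m → ℝ} {ω : Fin ng → ℝ} {t : ℝ}
    (hη : HasDerivAt η ((projIncidence BG BL γ (η t))ᵀ *ᵥ ω) t)
    (hΩ : ∀ k, η t k ∈ Ioo (-(Real.pi / 2)) (Real.pi / 2)) :
    HasDerivAt (fun s => (BL * diagonal γ) *ᵥ fun k => Real.sin (η s k)) 0 t := by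
  have hsin : HasDerivAt (fun s k => Real.sin (η s k))
      (diagonal (fun k => Real.cos (η t k)) *ᵥ ((projIncidence BG BL γ (η t))ᵀ *ᵥ ω)) t := by
    rw [show diagonal _ *ᵥ _ = _ from funext (mulVec_diagonal _ _)]
    exact hasDerivAt_pi.2 fun k => (hasDerivAt_pi.1 hη k).sin
  have hunit := isUnit_det_mul_diagonal_mul_transpose (hrank.trans (Fintype.card_fin nl).symm)
    fun k => mul_pos (hγ k) (Real.cos_pos_of_mem_Ioo (hΩ k))
  have h := hsin.matrix_mulVec_s11 (A := BL * diagonal γ)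
  rwa [mulVec_mulVec, mulVec_mulVec, Matrix.mul_assoc BL, diagonal_mul_diagonal,
    mul_diagonal_mul_projIncidence_transpose BG BL γ hunit, zero_mulVec] at h

end PowerNetwork

theorem reduced_ODE_to_nonlinear_DAE_general
    {ng nl m : ℕ}
    (BG : Matrix (Fin ng) (Fin m) ℝ) (BL : Matrix (Fin nl) (Fin m) ℝ)
    (γ : Fin m → ℝ) (hγ : ∀ k, 0 < γ k)
    (hrank : BL.rank = nl)
    (Md Ad : Fin ng → ℝ)
    (u : Fin ng → ℝ) (pstar : Fin nl → ℝ)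
    (T : ℝ)
    (η : ℝ → Fin m → ℝ) (ωG ωG' : ℝ → Fin ng → ℝ)
    (hη : ∀ t ∈ Set.Ico (0 : ℝ) T,
      HasDerivAt η ((projIncidence BG BL γ (η t))ᵀ *ᵥ ωG t) t)
    (hωG : ∀ t ∈ Set.Ico (0 : ℝ) T, HasDerivAt ωG (ωG' t) t)
    (hswing : ∀ t ∈ Set.Ico (0 : ℝ) T,
      diagonal Md *ᵥ ωG' t =
        -(diagonal Ad *ᵥ ωG t) -
          (BG * diagonal γ) *ᵥ (fun k => Real.sin (η t k)) + u)
    (hΩ : ∀ t ∈ Set.Ico (0 : ℝ) T, ∀ k,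
      η t k ∈ Set.Ioo (-(Real.pi / 2)) (Real.pi / 2))
    (hinit : ∃ x : Fin ng ⊕ Fin nl → ℝ, η 0 = (Matrix.fromRows BG BL)ᵀ *ᵥ x)
    (hcompat : (0 : Fin nl → ℝ) =
      pstar - (BL * diagonal γ) *ᵥ (fun k => Real.sin (η 0 k))) :
    ∃ θG : ℝ → Fin ng → ℝ, ∃ θL : ℝ → Fin nl → ℝ, ∃ θL' : ℝ → Fin nl → ℝ,
      (∀ t ∈ Set.Ico (0 : ℝ) T, BGᵀ *ᵥ θG t + BLᵀ *ᵥ θL t = η t) ∧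
      (∀ t ∈ Set.Ico (0 : ℝ) T, HasDerivAt θG (ωG t) t) ∧
      (∀ t ∈ Set.Ico (0 : ℝ) T, HasDerivAt θL (θL' t) t) ∧
      (∀ t ∈ Set.Ico (0 : ℝ) T,
        diagonal Md *ᵥ ωG' t =
          -(diagonal Ad *ᵥ ωG t) -
            (BG * diagonal γ) *ᵥ (fun k => Real.sin ((BGᵀ *ᵥ θG t + BLᵀ *ᵥ θL t) k)) + u) ∧
      (∀ t ∈ Set.Ico (0 : ℝ) T,
        (0 : Fin nl → ℝ) =
          -((BL * diagonal γ) *ᵥ (fun k => Real.sin ((BGᵀ *ᵥ θG t + BLᵀ *ᵥ θL t) k))) + pstar) := by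
  obtain ⟨x, hx⟩ := hinit
  obtain ⟨θG, hθG0, hθG⟩ := exists_hasDerivAt_Ico_of_continuousAt
    (fun t ht => (hωG t ht).continuousAt) (x ∘ Sum.inl)
  set C := (BL * BLᵀ)⁻¹ * BL
  have hC : C * BLᵀ = 1 := by
    have h := isUnit_det_mul_diagonal_mul_transpose (hrank.trans (Fintype.card_fin nl).symm)
      (d := fun _ => 1) fun _ => one_pos
    rw [diagonal_one, Matrix.mul_one] at h
    rw [Matrix.mul_assoc, nonsing_inv_mul _ h]
  have hres : ∀ t ∈ Ico (0 : ℝ) T, η t - BGᵀ *ᵥ θG t = BLᵀ *ᵥ (C *ᵥ (η t - BGᵀ *ᵥ θG t)) := by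
    refine eq_mulVec_mulVec_of_hasDerivAt_mulVec hC (fun t ht => ?_) ⟨x ∘ Sum.inr, ?_⟩
    · obtain ⟨w, hw⟩ := exists_projIncidence_transpose_mulVec_eq BG BL γ (η t) (ωG t)
      have h := (hη t ht).fun_sub ((hθG t ht).matrix_mulVec_s11 (A := BGᵀ))
      rw [hw, add_sub_cancel_left] at h
      exact ⟨w, h⟩
    · rw [hx, hθG0, transpose_fromRows, fromCols_mulVec, add_sub_cancel_left]
  have hsum : ∀ t ∈ Ico (0 : ℝ) T, BGᵀ *ᵥ θG t + BLᵀ *ᵥ (C *ᵥ (η t - BGᵀ *ᵥ θG t)) = η t :=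
    fun t ht => by rw [← hres t ht, add_sub_cancel]
  have hflow : ∀ t ∈ Ico (0 : ℝ) T, (BL * diagonal γ) *ᵥ (fun k => Real.sin (η t k)) = pstar :=
    fun t ht => (eq_of_hasDerivAt_zero_Ico (fun s hs =>
      hasDerivAt_mulVec_sin_eq_zero BG BL hγ hrank (hη s hs) (hΩ s hs)) t ht).trans
        (sub_eq_zero.mp hcompat.symm).symm
  refine ⟨θG, fun t => C *ᵥ (η t - BGᵀ *ᵥ θG t), _, hsum, hθG,
    fun t ht => ((hη t ht).sub (hθG t ht).matrix_mulVec_s11).matrix_mulVec_s11,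
    fun t ht => ?_, fun t ht => ?_⟩
  · rw [hsum t ht]
    exact hswing t ht
  · rw [hsum t ht, hflow t ht, neg_add_cancel]

theorem reduced_ODE_to_nonlinear_DAE
    {ng nl m : ℕ} (hng : 0 < ng) (hnl : 0 < nl) (hm : 0 < m)
    (BG : Matrix (Fin ng) (Fin m) ℝ) (BL : Matrix (Fin nl) (Fin m) ℝ)
    (γ : Fin m → ℝ) (hγ : ∀ k, 0 < γ k)
    (hrank : BL.rank = nl)
    (Md Ad : Fin ng → ℝ) (hM : ∀ i, 0 < Md i) (hA : ∀ i, 0 < Ad i)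
    (u : Fin ng → ℝ) (pstar : Fin nl → ℝ)
    (T : ℝ) (hT : 0 < T)
    (η : ℝ → Fin m → ℝ) (ωG ωG' : ℝ → Fin ng → ℝ)
    (hη : ∀ t ∈ Set.Ico (0 : ℝ) T,
      HasDerivAt η ((projIncidence BG BL γ (η t))ᵀ *ᵥ ωG t) t)
    (hωG : ∀ t ∈ Set.Ico (0 : ℝ) T, HasDerivAt ωG (ωG' t) t)
    (hswing : ∀ t ∈ Set.Ico (0 : ℝ) T,
      diagonal Md *ᵥ ωG' t =
        -(diagonal Ad *ᵥ ωG t) -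
          (BG * diagonal γ) *ᵥ (fun k => Real.sin (η t k)) + u)
    (hΩ : ∀ t ∈ Set.Ico (0 : ℝ) T, ∀ k,
      η t k ∈ Set.Ioo (-(Real.pi / 2)) (Real.pi / 2))
    (hinit : ∃ x : Fin ng ⊕ Fin nl → ℝ, η 0 = (Matrix.fromRows BG BL)ᵀ *ᵥ x)
    (hcompat : (0 : Fin nl → ℝ) =
      pstar - (BL * diagonal γ) *ᵥ (fun k => Real.sin (η 0 k))) :
    ∃ θG : ℝ → Fin ng → ℝ, ∃ θL : ℝ → Fin nl → ℝ, ∃ θL' : ℝ → Fin nl → ℝ,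
      (∀ t ∈ Set.Ico (0 : ℝ) T, BGᵀ *ᵥ θG t + BLᵀ *ᵥ θL t = η t) ∧
      (∀ t ∈ Set.Ico (0 : ℝ) T, HasDerivAt θG (ωG t) t) ∧
      (∀ t ∈ Set.Ico (0 : ℝ) T, HasDerivAt θL (θL' t) t) ∧
      (∀ t ∈ Set.Ico (0 : ℝ) T,
        diagonal Md *ᵥ ωG' t =
          -(diagonal Ad *ᵥ ωG t) -
            (BG * diagonal γ) *ᵥ (fun k => Real.sin ((BGᵀ *ᵥ θG t + BLᵀ *ᵥ θL t) k)) + u) ∧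
      (∀ t ∈ Set.Ico (0 : ℝ) T,
        (0 : Fin nl → ℝ) =
          -((BL * diagonal γ) *ᵥ (fun k => Real.sin ((BGᵀ *ᵥ θG t + BLᵀ *ᵥ θL t) k))) + pstar) :=
  reduced_ODE_to_nonlinear_DAE_general BG BL γ hγ hrank Md Ad u pstar T η ωG ωG' hη hωG hswing hΩ
    hinit hcompat
end

section
/- (Identifiability of equilibrium angles.) Let B ∈ ℝ^{n×m}, Γ ∈ ℝ^{m×m} a positive definite diagonal matrix, and suppose η, η̄ ∈ Ω = (−π/2, π/2)^m with η ∈ im Bᵀ and η̄ ∈ im Bᵀ. If B Γ (sin(η) − sin(η̄)) = 0, then η = η̄. -/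
/-!
Write `s = sin η - sin η̄`. Since η - η̄ lies in im Bᵀ, which is orthogonal to ker B, the hypothesis
`B (Γ s) = 0` gives `∑ₖ γₖ (ηₖ - η̄ₖ)(sin ηₖ - sin η̄ₖ) = 0`. Because sin is strictly increasing on
`(-π/2, π/2)`, every summand is nonnegative and vanishes only when `ηₖ = η̄ₖ`.
-/

open Matrix

theorem StrictMonoOn.sub_mul_sub_pos {s : Set ℝ} {f : ℝ → ℝ} (hf : StrictMonoOn f s)
    {a b : ℝ} (ha : a ∈ s) (hb : b ∈ s) (hab : a ≠ b) : 0 < (a - b) * (f a - f b) := by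
  rcases hab.lt_or_gt with hlt | hgt
  · exact mul_pos_of_neg_of_neg (sub_neg.2 hlt) (sub_neg.2 (hf ha hb hlt))
  · exact mul_pos (sub_pos.2 hgt) (sub_pos.2 (hf hb ha hgt))

theorem StrictMonoOn.eq_of_dotProduct_diagonal_mulVec_eq_zero
    {ι : Type*} [Fintype ι] [DecidableEq ι] {s : Set ℝ} {f : ℝ → ℝ} (hf : StrictMonoOn f s)
    {γ : ι → ℝ} (hγ : ∀ k, 0 < γ k)
    {u v : ι → ℝ} (hu : ∀ k, u k ∈ s) (hv : ∀ k, v k ∈ s)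
    (h : (u - v) ⬝ᵥ (diagonal γ *ᵥ ((fun k => f (u k)) - fun k => f (v k))) = 0) : u = v := by
  by_contra hne
  obtain ⟨k, hk⟩ := Function.ne_iff.1 hne
  have hterm_pos : ∀ i, u i ≠ v i → 0 < γ i * ((u i - v i) * (f (u i) - f (v i))) :=
    fun i hi => mul_pos (hγ i) (hf.sub_mul_sub_pos (hu i) (hv i) hi)
  have hterm_nonneg : ∀ i, 0 ≤ γ i * ((u i - v i) * (f (u i) - f (v i))) := fun i =>
    (eq_or_ne (u i) (v i)).elim (fun hi => by simp [hi]) fun hi => (hterm_pos i hi).le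
  have hsum_pos : 0 < ∑ i, γ i * ((u i - v i) * (f (u i) - f (v i))) :=
    Finset.sum_pos' (fun i _ => hterm_nonneg i) ⟨k, Finset.mem_univ k, hterm_pos k hk⟩
  refine hsum_pos.ne' ?_
  rw [← h, dotProduct, Finset.sum_congr rfl]
  intro i _
  simp only [mulVec_diagonal, Pi.sub_apply]
  ring

theorem Matrix.transpose_mulVec_dotProduct_eq_zero {ι κ : Type*} [Fintype ι] [Fintype κ]
    {B : Matrix ι κ ℝ} {w : κ → ℝ} (hw : B *ᵥ w = 0) (z : ι → ℝ) : (Bᵀ *ᵥ z) ⬝ᵥ w = 0 := by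
  rw [mulVec_transpose, ← dotProduct_mulVec, hw, dotProduct_zero]

theorem identifiability_of_equilibrium_angles_general
    {n m : ℕ}
    (B : Matrix (Fin n) (Fin m) ℝ)
    (γ : Fin m → ℝ) (hγ : ∀ k, 0 < γ k)
    (η ηb : Fin m → ℝ)
    (hη : ∀ k, η k ∈ Set.Ioo (-(Real.pi / 2)) (Real.pi / 2))
    (hηb : ∀ k, ηb k ∈ Set.Ioo (-(Real.pi / 2)) (Real.pi / 2))
    (hηim : ∃ x : Fin n → ℝ, η = Bᵀ *ᵥ x)
    (hηbim : ∃ x : Fin n → ℝ, ηb = Bᵀ *ᵥ x)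
    (hzero : (B * diagonal γ) *ᵥ
      ((fun k => Real.sin (η k)) - fun k => Real.sin (ηb k)) = 0) :
    η = ηb := by
  obtain ⟨x, hx⟩ := hηim
  obtain ⟨y, hy⟩ := hηbim
  have hsin : StrictMonoOn Real.sin (Set.Ioo (-(Real.pi / 2)) (Real.pi / 2)) :=
    Real.strictMonoOn_sin.mono Set.Ioo_subset_Icc_self
  refine hsin.eq_of_dotProduct_diagonal_mulVec_eq_zero hγ hη hηb ?_
  have hker :
      B *ᵥ (diagonal γ *ᵥ ((fun k => Real.sin (η k)) - fun k => Real.sin (ηb k))) = 0 := by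
    rwa [mulVec_mulVec]
  have hdiff : η - ηb = Bᵀ *ᵥ (x - y) := by rw [hx, hy, mulVec_sub]
  rw [hdiff]
  exact transpose_mulVec_dotProduct_eq_zero hker (x - y)

theorem identifiability_of_equilibrium_angles
    {n m : ℕ} (hn : 0 < n) (hm : 0 < m)
    (B : Matrix (Fin n) (Fin m) ℝ)
    (γ : Fin m → ℝ) (hγ : ∀ k, 0 < γ k)
    (η ηb : Fin m → ℝ)
    (hη : ∀ k, η k ∈ Set.Ioo (-(Real.pi / 2)) (Real.pi / 2))
    (hηb : ∀ k, ηb k ∈ Set.Ioo (-(Real.pi / 2)) (Real.pi / 2))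
    (hηim : ∃ x : Fin n → ℝ, η = Bᵀ *ᵥ x)
    (hηbim : ∃ x : Fin n → ℝ, ηb = Bᵀ *ᵥ x)
    (hzero : (B * diagonal γ) *ᵥ
      ((fun k => Real.sin (η k)) - fun k => Real.sin (ηb k)) = 0) :
    η = ηb :=
  identifiability_of_equilibrium_angles_general B γ hγ η ηb hη hηb hηim hηbim hzero
end
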